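/- Volterra-type Carleman weight estimate: for φ_λ(x,t)=exp(λ(|x-x₀|²-ηt²)) with λ ≥ 1 and any g ∈ L²(Q_T), ∫_{Q_T} (∫₀ᵗ g(x,τ)dτ)² φ_λ²(x,t) dx dt ≤ (C/λ) ∫_{Q_T} g²(x,t) φ_λ²(x,t) dx dt, where C > 0 depends only on η and T. (One-dimensional in t version: for fixed x, ∫₀ᵀ (∫₀ᵗ g(τ)dτ)² e^{-2ληt²} dt ≤ (1/(2λη)) ∫₀ᵀ g²(t) e^{-2ληt²} dt... up to constant.) -/

import Mathlib

open MeasureTheory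

/-- Key 1D lemma: weighted Volterra estimate with weight `exp(-μ t²)`. -/
lemma key1d (μ T : ℝ) (hμ : 0 < μ) (hT : 0 < T) (h : ℝ → ℝ) (hc : Continuous h) :
    (∫ t in (0:ℝ)..T, (∫ τ in (0:ℝ)..t, h τ)^2 * Real.exp (-(μ * t^2)))
      ≤ (1/(2*μ)) * ∫ t in (0:ℝ)..T, (h t)^2 * Real.exp (-(μ * t^2)) := by
  set w : ℝ → ℝ := fun t => Real.exp (-(μ * t^2)) with hwdef
  have hwcont : Continuous w := by
    apply Real.continuous_exp.comp; continuity
  set I : ℝ → ℝ := fun t => ∫ τ in (0:ℝ)..t, h τ with hIdef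
  have hI : ∀ t : ℝ, HasDerivAt I (h t) t := by
    intro t
    exact intervalIntegral.integral_hasDerivAt_right (hc.intervalIntegrable 0 t)
      (hc.stronglyMeasurable.stronglyMeasurableAtFilter) hc.continuousAt
  have hIcont : Continuous I := continuous_iff_continuousAt.2 fun t => (hI t).continuousAt
  have hI0 : I 0 = 0 := intervalIntegral.integral_same
  set Φ : ℝ → ℝ := fun t => ∫ τ in (0:ℝ)..t, (I τ)^2 * w τ with hΦdef
  set Ψ : ℝ → ℝ := fun t => ∫ τ in (0:ℝ)..t, (h τ)^2 * w τ with hΨdef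
  have hΦic : Continuous fun τ => (I τ)^2 * w τ := (hIcont.pow 2).mul hwcont
  have hΨic : Continuous fun τ => (h τ)^2 * w τ := (hc.pow 2).mul hwcont
  have hΦ : ∀ t : ℝ, HasDerivAt Φ ((I t)^2 * w t) t := fun t =>
    intervalIntegral.integral_hasDerivAt_right (hΦic.intervalIntegrable 0 t)
      (hΦic.stronglyMeasurable.stronglyMeasurableAtFilter) hΦic.continuousAt
  have hΨ : ∀ t : ℝ, HasDerivAt Ψ ((h t)^2 * w t) t := fun t =>
    intervalIntegral.integral_hasDerivAt_right (hΨic.intervalIntegrable 0 t)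
      (hΨic.stronglyMeasurable.stronglyMeasurableAtFilter) hΨic.continuousAt
  have hΦcont : Continuous Φ := continuous_iff_continuousAt.2 fun t => (hΦ t).continuousAt
  have hΨcont : Continuous Ψ := continuous_iff_continuousAt.2 fun t => (hΨ t).continuousAt
  have hΦ0 : Φ 0 = 0 := intervalIntegral.integral_same
  have hΨ0 : Ψ 0 = 0 := intervalIntegral.integral_same
  have hw : ∀ t : ℝ, HasDerivAt w (w t * (-(μ * (2*t)))) t := by
    intro t
    have h1 : HasDerivAt (fun s : ℝ => -(μ * s^2)) (-(μ * (2*t))) t := by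
      exact ((hasDerivAt_pow 2 t).const_mul μ).fun_neg.congr_deriv (by norm_num)
    simpa using h1.exp
  have hwpos : ∀ t : ℝ, 0 < w t := fun t => Real.exp_pos _
  -- numerator N = I² w
  have hN : ∀ t : ℝ, HasDerivAt (fun t => (I t)^2 * w t)
      ((2 * I t ^ 1 * h t) * w t + (I t)^2 * (w t * (-(μ * (2*t))))) t := by
    intro t
    exact (((hI t).pow 2)).mul (hw t)
  set B : ℝ → ℝ := fun t => (I t)^2 * w t / (2*μ*t) with hBdef
  set D : ℝ → ℝ := fun t =>
    (h t)^2 * w t / (2*μ) - (I t)^2 * w t -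
      (((2 * I t ^ 1 * h t) * w t + (I t)^2 * (w t * (-(μ * (2*t))))) * (2*μ*t)
        - (I t)^2 * w t * (2*μ)) / (2*μ*t)^2 with hDdef
  set F : ℝ → ℝ := fun t => Ψ t / (2*μ) - Φ t - B t with hFdef
  have hF : ∀ t : ℝ, t ≠ 0 → HasDerivAt F (D t) t := by
    intro t ht
    have hden : (2*μ*t) ≠ 0 := by
      have : μ ≠ 0 := ne_of_gt hμ
      simp [this, ht]
    have hd : HasDerivAt (fun t : ℝ => 2*μ*t) (2*μ) t := by
      simpa using (hasDerivAt_id t).const_mul (2*μ)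
    have hB : HasDerivAt B
        ((((2 * I t ^ 1 * h t) * w t + (I t)^2 * (w t * (-(μ * (2*t))))) * (2*μ*t)
          - (I t)^2 * w t * (2*μ)) / (2*μ*t)^2) t := (hN t).div hd hden
    exact (((hΨ t).div_const (2*μ)).sub (hΦ t)).sub hB
  have hDnonneg : ∀ t : ℝ, 0 < t → 0 ≤ D t := by
    intro t ht
    have hteq : D t = w t / (2*μ) * (h t - I t / t)^2 := by
      rw [hDdef]
      field_simp
      ring
    rw [hteq]
    positivity
  -- monotonicity of F on [ε, T]
  have hmono : ∀ ε : ℝ, 0 < ε → ε ≤ T → F ε ≤ F T := by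
    intro ε hε hεT
    have hcont : ContinuousOn F (Set.Icc ε T) := by
      intro t htmem
      have ht : (0:ℝ) < t := lt_of_lt_of_le hε htmem.1
      exact ((hF t ht.ne').differentiableAt.continuousAt).continuousWithinAt
    have hdiff : DifferentiableOn ℝ F (interior (Set.Icc ε T)) := by
      intro t htmem
      rw [interior_Icc] at htmem
      have ht : (0:ℝ) < t := lt_of_lt_of_le hε htmem.1.le
      exact ((hF t ht.ne').differentiableAt).differentiableWithinAt
    have hderiv : ∀ t ∈ interior (Set.Icc ε T), 0 ≤ deriv F t := by
      intro t htmem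
      rw [interior_Icc] at htmem
      have ht : (0:ℝ) < t := lt_of_lt_of_le hε htmem.1.le
      rw [(hF t ht.ne').deriv]
      exact hDnonneg t ht
    exact monotoneOn_of_deriv_nonneg (convex_Icc ε T) hcont hdiff hderiv
      ⟨le_refl ε, hεT⟩ ⟨hεT, le_refl T⟩ hεT
  -- limit of F at 0⁺
  have hslope : Filter.Tendsto (fun ε => I ε / ε) (nhdsWithin 0 (Set.Ioi 0)) (nhds (h 0)) := by
    have h1 := hasDerivAt_iff_tendsto_slope.1 (hI 0)
    have h2 : Filter.Tendsto (slope I 0) (nhdsWithin 0 (Set.Ioi 0)) (nhds (h 0)) :=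
      h1.mono_left (nhdsWithin_mono _ (fun x hx => ne_of_gt hx))
    refine h2.congr' ?_
    filter_upwards [self_mem_nhdsWithin] with ε (hε : ε ∈ Set.Ioi 0)
    simp [slope_def_field, hI0]
  have hlim : Filter.Tendsto F (nhdsWithin 0 (Set.Ioi 0)) (nhds 0) := by
    have T1 : Filter.Tendsto (fun ε => Ψ ε / (2*μ) - Φ ε)
        (nhdsWithin 0 (Set.Ioi 0)) (nhds 0) := by
      have := ((hΨcont.tendsto 0).div_const (2*μ)).sub (hΦcont.tendsto 0)
      rw [hΨ0, hΦ0] at this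
      simpa using this.mono_left nhdsWithin_le_nhds
    have T3 : Filter.Tendsto (fun ε => (I ε / ε) * (I ε * w ε) / (2*μ))
        (nhdsWithin 0 (Set.Ioi 0)) (nhds 0) := by
      have hIw : Filter.Tendsto (fun ε => I ε * w ε) (nhdsWithin 0 (Set.Ioi 0))
          (nhds (I 0 * w 0)) :=
        ((hIcont.mul hwcont).tendsto 0).mono_left nhdsWithin_le_nhds
      have := (hslope.mul hIw).div_const (2*μ)
      rw [hI0] at this
      simpa using this
    have := T1.sub T3
    rw [sub_zero] at this
    refine this.congr' ?_
    filter_upwards [self_mem_nhdsWithin] with ε (hε : ε ∈ Set.Ioi 0)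
    have hε0 : ε ≠ 0 := ne_of_gt hε
    have hμ0 : μ ≠ 0 := ne_of_gt hμ
    rw [hFdef, hBdef]
    field_simp
  have hFT : 0 ≤ F T := by
    refine le_of_tendsto hlim ?_
    filter_upwards [Ioo_mem_nhdsGT_of_mem (Set.mem_Ico.2 ⟨le_refl 0, hT⟩)] with ε hε
    exact hmono ε hε.1 hε.2.le
  have hBT : 0 ≤ B T := by
    rw [hBdef]
    have := hwpos T
    have := sq_nonneg (I T)
    positivity
  have hmain : Φ T ≤ 1/(2*μ) * Ψ T := by
    have h1 : F T = Ψ T / (2*μ) - Φ T - B T := rfl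
    have h4 : Φ T = Ψ T / (2 * μ) - (B T + F T) := by rw [h1]; ring
    rw [show (1:ℝ)/(2*μ) * Ψ T = Ψ T/(2*μ) from by ring, h4]
    exact sub_le_self _ (add_nonneg hBT hFT)
  exact hmain

/-- Inner (fixed x) estimate with the full Carleman weight. -/
lemma inner1 (η T lam a : ℝ) (hη : 0 < η) (hT : 0 < T) (hlam : 1 ≤ lam)
    (h : ℝ → ℝ) (hc : Continuous h) :
    (∫ t in (0:ℝ)..T, (∫ τ in (0:ℝ)..t, h τ)^2 * Real.exp (lam * (a - η * t^2))^2)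
      ≤ (1/(4*η)/lam) * ∫ t in (0:ℝ)..T, (h t)^2 * Real.exp (lam * (a - η * t^2))^2 := by
  have hlam0 : 0 < lam := lt_of_lt_of_le one_pos hlam
  have hμ : 0 < 2*lam*η := by positivity
  have hexp : ∀ t : ℝ, Real.exp (lam * (a - η * t^2))^2
      = Real.exp (2*lam*a) * Real.exp (-((2*lam*η) * t^2)) := by
    intro t
    rw [sq, ← Real.exp_add, ← Real.exp_add]
    congr 1
    ring
  have e1 : (∫ t in (0:ℝ)..T, (∫ τ in (0:ℝ)..t, h τ)^2 * Real.exp (lam * (a - η * t^2))^2)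
      = Real.exp (2*lam*a) *
        ∫ t in (0:ℝ)..T, (∫ τ in (0:ℝ)..t, h τ)^2 * Real.exp (-((2*lam*η) * t^2)) := by
    rw [← intervalIntegral.integral_const_mul]
    apply intervalIntegral.integral_congr
    intro t _
    show (∫ τ in (0:ℝ)..t, h τ)^2 * Real.exp (lam * (a - η * t^2))^2
      = Real.exp (2*lam*a) * ((∫ τ in (0:ℝ)..t, h τ)^2 * Real.exp (-((2*lam*η) * t^2)))
    rw [hexp t]
    ring
  have e2 : (∫ t in (0:ℝ)..T, (h t)^2 * Real.exp (lam * (a - η * t^2))^2)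
      = Real.exp (2*lam*a) *
        ∫ t in (0:ℝ)..T, (h t)^2 * Real.exp (-((2*lam*η) * t^2)) := by
    rw [← intervalIntegral.integral_const_mul]
    apply intervalIntegral.integral_congr
    intro t _
    show (h t)^2 * Real.exp (lam * (a - η * t^2))^2
      = Real.exp (2*lam*a) * ((h t)^2 * Real.exp (-((2*lam*η) * t^2)))
    rw [hexp t]
    ring
  rw [e1, e2]
  have hkey := key1d (2*lam*η) T hμ hT h hc
  have hKpos : (0:ℝ) < Real.exp (2*lam*a) := Real.exp_pos _
  calc Real.exp (2*lam*a) *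
        ∫ t in (0:ℝ)..T, (∫ τ in (0:ℝ)..t, h τ)^2 * Real.exp (-((2*lam*η) * t^2))
      ≤ Real.exp (2*lam*a) *
        ((1/(2*(2*lam*η))) * ∫ t in (0:ℝ)..T, (h t)^2 * Real.exp (-((2*lam*η) * t^2))) :=
        mul_le_mul_of_nonneg_left hkey hKpos.le
    _ = (1/(4*η)/lam) * (Real.exp (2*lam*a) *
        ∫ t in (0:ℝ)..T, (h t)^2 * Real.exp (-((2*lam*η) * t^2))) := by
        rw [show (1:ℝ)/(2*(2*lam*η)) = 1/(4*η)/lam from by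
          rw [div_div]; congr 1; ring]
        ring

/-- Volterra-type Carleman weight estimate: for the weight
φ_λ(x,t) = exp(λ(‖x-x₀‖² - ηt²)) there is C > 0 depending only on η, T such
that for every λ ≥ 1 and every continuous g,
∫_Ω ∫₀ᵀ (∫₀ᵗ g(x,τ)dτ)² φ_λ²(x,t) dt dx ≤ (C/λ) ∫_Ω ∫₀ᵀ g²(x,t) φ_λ²(x,t) dt dx. -/
theorem stmt9
    (Ω : Set (EuclideanSpace ℝ (Fin 3))) (hΩ : MeasurableSet Ω)
    (hΩbd : Bornology.IsBounded Ω)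
    (x₀ : EuclideanSpace ℝ (Fin 3)) (η T : ℝ) (hη : 0 < η) (hT : 0 < T) :
    ∃ C > 0, ∀ lam : ℝ, 1 ≤ lam →
      ∀ g : EuclideanSpace ℝ (Fin 3) → ℝ → ℝ,
        Continuous (fun p : EuclideanSpace ℝ (Fin 3) × ℝ => g p.1 p.2) →
        ∫ x in Ω, ∫ t in (0:ℝ)..T,
            (∫ τ in (0:ℝ)..t, g x τ)^2
              * Real.exp (lam * (‖x - x₀‖^2 - η * t^2))^2
          ≤ (C / lam) * ∫ x in Ω, ∫ t in (0:ℝ)..T,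
            (g x t)^2 * Real.exp (lam * (‖x - x₀‖^2 - η * t^2))^2 := by
  refine ⟨1/(4*η), by positivity, ?_⟩
  intro lam hlam g hg
  have hlam0 : 0 < lam := lt_of_lt_of_le one_pos hlam
  -- pointwise inner estimate
  have hpt : ∀ x : EuclideanSpace ℝ (Fin 3),
      (∫ t in (0:ℝ)..T, (∫ τ in (0:ℝ)..t, g x τ)^2
          * Real.exp (lam * (‖x - x₀‖^2 - η * t^2))^2)
        ≤ (1/(4*η)/lam) * ∫ t in (0:ℝ)..T,
          (g x t)^2 * Real.exp (lam * (‖x - x₀‖^2 - η * t^2))^2 := by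
    intro x
    exact inner1 η T lam (‖x - x₀‖^2) hη hT hlam (g x) (hg.comp (Continuous.prodMk_right x))
  -- continuity of right-hand inner integral in x
  have hRint : Continuous fun p : (EuclideanSpace ℝ (Fin 3)) × ℝ =>
      (g p.1 p.2)^2 * Real.exp (lam * (‖p.1 - x₀‖^2 - η * p.2^2))^2 := by
    apply Continuous.mul (hg.pow 2)
    apply Continuous.pow
    apply Real.continuous_exp.comp
    fun_prop
  have hFRcont : Continuous fun x : EuclideanSpace ℝ (Fin 3) =>
      ∫ t in (0:ℝ)..T, (g x t)^2 * Real.exp (lam * (‖x - x₀‖^2 - η * t^2))^2 :=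
    intervalIntegral.continuous_parametric_intervalIntegral_of_continuous' (f := fun (x : EuclideanSpace ℝ (Fin 3)) (t : ℝ) =>
      (g x t)^2 * Real.exp (lam * (‖x - x₀‖^2 - η * t^2))^2) hRint 0 T
  -- integrability of the right-hand side on Ω
  have hcompact : IsCompact (closure Ω) := hΩbd.isCompact_closure
  have hFRintOn : IntegrableOn (fun x : EuclideanSpace ℝ (Fin 3) =>
      ∫ t in (0:ℝ)..T, (g x t)^2 * Real.exp (lam * (‖x - x₀‖^2 - η * t^2))^2) Ω := by
    exact (hFRcont.continuousOn.integrableOn_compact hcompact).mono_set subset_closure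
  rw [show (1/(4*η) : ℝ) / lam * (∫ x in Ω, ∫ t in (0:ℝ)..T,
      (g x t)^2 * Real.exp (lam * (‖x - x₀‖^2 - η * t^2))^2)
    = ∫ x in Ω, (1/(4*η)/lam) * ∫ t in (0:ℝ)..T,
      (g x t)^2 * Real.exp (lam * (‖x - x₀‖^2 - η * t^2))^2 from
    (integral_const_mul _ _).symm]
  refine integral_mono_of_nonneg ?_ (hFRintOn.const_mul _) ?_
  · filter_upwards with x
    apply intervalIntegral.integral_nonneg hT.le
    intro t _
    positivity
  · filter_upwards with x
    exact hpt x
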